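/- arXiv:0708.4381 — 3 statements merged into one kernel-verified Lean document; each statement's English description precedes it below -/
import Mathlib

section
/- Let F be a finite field and suppose a subgroup H of GL(n, F) is isomorphic to the alternating group A_{4d₁} for some positive integer d₁. Then n ≥ d₁. -/
/-!
Whichever of 2 and 3 is nonzero in `F`, `A₄` has an element of that order `p`, so `A_{4d}`
contains the elementary abelian group `(ℤ/p)^d`, acting on `d` disjoint blocks of four letters.
Over the algebraic closure of `F`, commuting endomorphisms of exponent `p` with `p` invertible are
simultaneously diagonalisable with `p`-th roots of unity as eigenvalues, so an abelian subgroup of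
exponent `p` of `GL(n)` has order at most `p ^ n`.
-/

open Module Equiv Subgroup Function Polynomial
open scoped IsMulCommutative

namespace Module.End

variable {K V : Type*} [Field K] [AddCommGroup V] [Module K V] {p : ℕ}

lemma isSemisimple_of_pow_eq_one {f : End K V} (hp : (p : K) ≠ 0) (hf : f ^ p = 1) :
    f.IsSemisimple :=
  isSemisimple_of_squarefree_aeval_eq_zero (separable_X_pow_sub_C 1 hp one_ne_zero).squarefree
    (by simp [hf])

lemma apply_eq_smul_of_mem_maxGenEigenspace_of_pow_eq_one {f : End K V} {μ : K} {x : V}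
    (hp : (p : K) ≠ 0) (hf : f ^ p = 1) (hx : x ∈ f.maxGenEigenspace μ) : f x = μ • x := by
  rw [(isSemisimple_of_pow_eq_one hp hf).isFinitelySemisimple.maxGenEigenspace_eq_eigenspace]
    at hx
  exact mem_eigenspace_iff.mp hx

lemma HasEigenvector.pow_eq_one_of_pow_eq_one {f : End K V} {μ : K} {x : V}
    (hx : f.HasEigenvector μ x) (hf : f ^ p = 1) : μ ^ p = 1 :=
  smul_left_injective K hx.2 (by simpa [hf] using (hx.pow_apply p).symm)

end Module.End

open Module.End in
theorem MonoidHom.card_le_pow_finrank_of_injective {K V G : Type*} [Field K] [IsAlgClosed K]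
    [AddCommGroup V] [Module K V] [FiniteDimensional K V] [CommGroup G] {p : ℕ}
    (hp : (p : K) ≠ 0) (hG : ∀ g : G, g ^ p = 1) (ρ : G →* End K V) (hρ : Injective ρ) :
    Nat.card G ≤ p ^ finrank K V := by
  classical
  have hp₀ : 0 < p := Nat.pos_of_ne_zero (by rintro rfl; simp at hp)
  have hρp (g : G) : ρ g ^ p = 1 := by rw [← map_pow, hG, map_one]
  let P : (G → K) → Submodule K V := fun χ ↦ ⨅ g, (ρ g).maxGenEigenspace (χ g)
  have hP : ⨆ χ, P χ = ⊤ :=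
    iSup_iInf_maxGenEigenspace_eq_top_of_iSup_maxGenEigenspace_eq_top_of_commute _
      (fun g h _ ↦ (Commute.all g h).map ρ) fun g ↦ iSup_maxGenEigenspace_eq_top _
  have hPind : iSupIndep P := independent_iInf_maxGenEigenspace_of_forall_mapsTo _
    fun g h _ ↦ mapsTo_maxGenEigenspace_of_comm ((Commute.all h g).map ρ) _
  have hact (χ : G → K) (g : G) {x : V} (hx : x ∈ P χ) : ρ g x = χ g • x :=
    apply_eq_smul_of_mem_maxGenEigenspace_of_pow_eq_one hp (hρp g)
      ((Submodule.mem_iInf _).mp hx g)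
  -- An element of `G` is determined by the scalars by which it acts on the nonzero joint
  -- generalized eigenspaces; these are at most `finrank K V` in number.
  let S := {χ : G → K // P χ ≠ ⊥}
  let _ : Fintype S := hPind.fintypeNeBotOfFiniteDimensional
  have hroot (χ : S) (g : G) : χ.1 g ∈ nthRootsFinset p (1 : K) := by
    obtain ⟨x, hx, hx₀⟩ := Submodule.exists_mem_ne_zero_of_ne_bot χ.2
    exact (mem_nthRootsFinset hp₀ 1).mpr
      (HasEigenvector.pow_eq_one_of_pow_eq_one ⟨mem_eigenspace_iff.mpr (hact _ g hx), hx₀⟩ (hρp g))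
  let J : G → S → nthRootsFinset p (1 : K) := fun g χ ↦ ⟨χ.1 g, hroot χ g⟩
  have hJ : Injective J := by
    intro g h hgh
    refine hρ (LinearMap.ext_on (s := ⋃ χ : S, (P χ : Set V)) ?_ ?_)
    · rw [← Submodule.iSup_eq_span, iSup_ne_bot_subtype P, hP]
    · rintro x ⟨_, ⟨χ, rfl⟩, hx : x ∈ P χ⟩
      rw [hact _ g hx, hact _ h hx]
      exact congrArg (· • x) (congrArg Subtype.val (congrFun hgh χ))
  calc Nat.card G ≤ Nat.card (S → nthRootsFinset p (1 : K)) := Nat.card_le_card_of_injective J hJ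
    _ = (nthRootsFinset p (1 : K)).card ^ Fintype.card S := by
      rw [Nat.card_fun, Nat.card_eq_fintype_card, Nat.card_eq_fintype_card, Fintype.card_coe]
    _ ≤ p ^ finrank K V :=
      (Nat.pow_le_pow_left ((Multiset.toFinset_card_le _).trans (card_nthRoots p 1)) _).trans
        (Nat.pow_le_pow_right hp₀ hPind.subtype_ne_bot_le_finrank)

theorem Matrix.GeneralLinearGroup.card_le_pow_of_injective {F G n : Type*} [Field F]
    [CommGroup G] [Fintype n] [DecidableEq n] {p : ℕ} (hp : (p : F) ≠ 0)
    (hG : ∀ g : G, g ^ p = 1) (ρ : G →* GL n F) (hρ : Injective ρ) :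
    Nat.card G ≤ p ^ Fintype.card n := by
  let K := AlgebraicClosure F
  let ρK : G →* End K (n → K) := (Matrix.toLinAlgEquiv' : Matrix n n K ≃ₐ[K] _).toMonoidHom.comp
    ((Units.coeHom _).comp ((map (algebraMap F K)).comp ρ))
  have hρK : Injective ρK := Matrix.toLinAlgEquiv'.injective.comp <| Units.val_injective.comp <|
    (Units.map_injective (Matrix.map_injective (algebraMap F K).injective)).comp hρ
  have hpK : (p : K) ≠ 0 := by rwa [← map_natCast (algebraMap F K), _root_.map_ne_zero]
  simpa using ρK.card_le_pow_finrank_of_injective hpK hG hρK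

namespace Equiv.Perm

variable (ι α : Type*)

def prodCongrRightHom : (ι → Perm α) →* Perm (ι × α) where
  toFun := prodCongrRight
  map_one' := rfl
  map_mul' _ _ := rfl

variable {ι α} in
lemma prodCongrRightHom_injective : Injective (prodCongrRightHom ι α) := fun _ _ h ↦
  funext fun i ↦ Equiv.ext fun a ↦ congrArg Prod.snd (Equiv.congr_fun h (i, a))

end Equiv.Perm

namespace alternatingGroup

variable (ι α : Type*) [Fintype ι] [DecidableEq ι] [Fintype α] [DecidableEq α]

def prodCongrRightHom : (ι → alternatingGroup α) →* alternatingGroup (ι × α) :=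
  ((Perm.prodCongrRightHom ι α).comp ((alternatingGroup α).subtype.compLeft ι)).codRestrict _
    fun σ ↦ Perm.mem_alternatingGroup.mpr <| (Perm.sign_prodCongrRight _).trans <|
      Finset.prod_eq_one fun i _ ↦ Perm.mem_alternatingGroup.mp (σ i).2

variable {ι α} in
lemma prodCongrRightHom_injective : Injective (prodCongrRightHom ι α) := fun _ _ h ↦
  Subtype.val_injective.comp_left (Perm.prodCongrRightHom_injective (congrArg Subtype.val h))

end alternatingGroup

lemma exists_injective_pi_alternatingGroup_fin (m d : ℕ) :
    ∃ φ : (Fin d → alternatingGroup (Fin m)) →* alternatingGroup (Fin (m * d)), Injective φ :=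
  let e : Fin d × Fin m ≃ Fin (m * d) := finProdFinEquiv.trans (finCongr (mul_comm d m))
  ⟨e.altCongrHom.toMonoidHom.comp (alternatingGroup.prodCongrRightHom _ _),
    fun _ _ h ↦ alternatingGroup.prodCongrRightHom_injective (e.altCongrHom.injective h)⟩

lemma exists_alternatingGroup_fin_four_one_lt_orderOf (F : Type*) [Field F] :
    ∃ σ : alternatingGroup (Fin 4), 1 < orderOf σ ∧ (orderOf σ : F) ≠ 0 := by
  by_cases h2 : (2 : F) = 0
  · refine ⟨⟨swap 0 1 * swap 1 2, Perm.mem_alternatingGroup.mpr (by decide)⟩, ?_⟩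
    rw [orderOf_eq_prime (p := 3) (by decide) (by decide)]
    refine ⟨by norm_num, ?_⟩
    rw [show ((3 : ℕ) : F) = 2 + 1 by norm_num, h2, zero_add]
    exact one_ne_zero
  · refine ⟨⟨swap 0 1 * swap 2 3, Perm.mem_alternatingGroup.mpr (by decide)⟩, ?_⟩
    rw [orderOf_eq_prime (p := 2) (by decide) (by decide)]
    exact ⟨by norm_num, by exact_mod_cast h2⟩

theorem gl_subgroup_iso_alternating_four_mul_general (F : Type*) [Field F]
    (n d₁ : ℕ)
    (H : Subgroup (Matrix.GeneralLinearGroup (Fin n) F))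
    (h : Nonempty (H ≃* alternatingGroup (Fin (4 * d₁)))) :
    d₁ ≤ n := by
  obtain ⟨e⟩ := h
  obtain ⟨σ, hσ, hσF⟩ := exists_alternatingGroup_fin_four_one_lt_orderOf F
  obtain ⟨φ, hφ⟩ := exists_injective_pi_alternatingGroup_fin 4 d₁
  let ρ : (Fin d₁ → zpowers σ) →* Matrix.GeneralLinearGroup (Fin n) F :=
    H.subtype.comp (e.symm.toMonoidHom.comp (φ.comp ((zpowers σ).subtype.compLeft _)))
  have hρ : Injective ρ :=
    H.subtype_injective.comp (e.symm.injective.comp (hφ.comp Subtype.val_injective.comp_left))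
  have hexp (g : Fin d₁ → zpowers σ) : g ^ orderOf σ = 1 :=
    funext fun i ↦ by rw [Pi.pow_apply, ← Nat.card_zpowers]; exact pow_card_eq_one'
  have hcard := Matrix.GeneralLinearGroup.card_le_pow_of_injective hσF hexp ρ hρ
  rw [Nat.card_fun, Nat.card_zpowers, Nat.card_fin, Fintype.card_fin] at hcard
  exact (Nat.pow_le_pow_iff_right hσ).mp hcard

/-- If a subgroup `H` of `GL(n, F)` over a finite field `F` is isomorphic
to the alternating group `A_{4*d₁}`, `d₁ ≥ 1`, then `n ≥ d₁`. -/
theorem gl_subgroup_iso_alternating_four_mul (F : Type*) [Field F] [Fintype F]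
    (n d₁ : ℕ) (hd₁ : 0 < d₁)
    (H : Subgroup (Matrix.GeneralLinearGroup (Fin n) F))
    (h : Nonempty (H ≃* alternatingGroup (Fin (4 * d₁)))) :
    d₁ ≤ n :=
  gl_subgroup_iso_alternating_four_mul_general F n d₁ H h
end

section
/- For d ≥ 7, every injective group homomorphism S_d → S_{d+1} is conjugate to the standard embedding; in particular, it sends every transposition to a transposition. -/
/-!
An injective `α : S_d → S_{d+1}` sends a transposition `(a b)` to an involution `g` centralizing
the image of the copy of `S_{d-2}` fixing `a` and `b`. The centralizer of `g` permutes the `k`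
two-cycles and the `m = d + 1 - 2k` fixed points of `g`, and an element acting trivially on both
squares to `1`. Since `S_{d-2}` (`d - 2 ≥ 5`) has no nontrivial normal subgroup of exponent two,
`S_{d-2}` embeds into `S_k × S_m`, which for `k ≥ 2` contradicts `k! m! < (d-2)!`.

So `α` maps the pairwise non-commuting transpositions `(x₀ x)` to pairwise non-commuting
transpositions. These share a common point `c`: the only other configuration, a triangle
`(c y₁), (c y₂), (y₁ y₂)`, is excluded because `(y₁ y₂)` is the image of `(x₁ x₂)`, which commutes
with every other `(x₀ x)`. Writing `α (x₀ x) = (c (e x))` defines an embedding `e` inducing `α`,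
and any two embeddings `Fin d ↪ Fin (d + 1)` differ by a permutation.
-/

open Equiv Equiv.Perm Subgroup Finset
open scoped Nat

namespace Nat

theorem factorial_mul_factorial_lt_factorial_add {i j : ℕ} (hi : 1 ≤ i) (hj : 1 ≤ j) :
    i ! * j ! < (i + j)! := by
  obtain ⟨j, rfl⟩ : ∃ j', j = j' + 1 := ⟨j - 1, by omega⟩
  calc i ! * (j + 1)! = (j + 1) * (i ! * j !) := by rw [factorial_succ]; ring
    _ ≤ (j + 1) * (i + j)! := Nat.mul_le_mul_left _ <|
        Nat.le_of_dvd (factorial_pos _) (factorial_mul_factorial_dvd_factorial_add i j)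
    _ < (i + j + 1) * (i + j)! := by gcongr; omega
    _ = (i + (j + 1))! := by rw [← add_assoc, factorial_succ]

theorem factorial_mul_factorial_lt_factorial {n k m : ℕ} (hn : 5 ≤ n) (hk : 2 ≤ k)
    (h : 2 * k + m ≤ n + 3) : k ! * m ! < n ! := by
  obtain rfl | hk := hk.eq_or_lt
  · obtain ⟨n, rfl⟩ : ∃ n', n = n' + 1 := ⟨n - 1, by omega⟩
    calc 2 ! * m ! ≤ 2 * n ! := by gcongr; exacts [le_rfl, by omega]
      _ < (n + 1) * n ! := by gcongr; omega
      _ = (n + 1)! := (factorial_succ n).symm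
  · calc k ! * m ! ≤ k ! * (n - k)! := by gcongr; omega
      _ < (k + (n - k))! := factorial_mul_factorial_lt_factorial_add (by omega) (by omega)
      _ = n ! := by congr 1; omega

end Nat

namespace Equiv.Perm

variable {X Y : Type*}

theorem mul_self_eq_one_of_forall_apply_eq_or {g : Perm X} (hg : g * g = 1) {c : Perm X}
    (hc : ∀ x, c x = x ∨ c x = g x) : c * c = 1 := by
  ext x
  rw [mul_apply, one_apply]
  rcases hc x with h | h
  · rw [h, h]
  rcases hc (g x) with h' | h'
  · rw [h, h', c.injective (h'.trans h.symm)]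
  · rw [h, h', ← mul_apply, hg, one_apply]

theorem exists_apply_ne_and_apply_ne_of_not_commute {s t : Perm X} (h : ¬Commute s t) :
    ∃ z, s z ≠ z ∧ t z ≠ z := by
  contrapose! h
  exact Disjoint.commute fun z => (em (s z = z)).imp_right (h z)

theorem viaEmbedding_eq_mul_mul_inv {ι ι' : X ↪ Y} {G : Perm Y} (hG : ∀ x, G (ι x) = ι' x)
    (σ : Perm X) : σ.viaEmbedding ι' = G * σ.viaEmbedding ι * G⁻¹ := by
  ext y
  by_cases hy : y ∈ Set.range ι'
  · obtain ⟨x, rfl⟩ := hy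
    rw [viaEmbedding_apply, ← hG, ← hG, mul_apply, mul_apply, coe_inv, symm_apply_apply,
      viaEmbedding_apply]
  · have hy' : G⁻¹ y ∉ Set.range ι := by
      rintro ⟨x, hx⟩
      exact hy ⟨x, by rw [← hG, hx, coe_inv, apply_symm_apply]⟩
    rw [viaEmbedding_apply_of_notMem _ _ _ hy, mul_apply, mul_apply,
      viaEmbedding_apply_of_notMem _ _ _ hy', coe_inv, apply_symm_apply]

variable [DecidableEq X] [DecidableEq Y]

theorem IsSwap.eq_swap_apply {s : Perm X} (hs : s.IsSwap) {x : X} (hx : s x ≠ x) :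
    s = swap x (s x) := by
  obtain ⟨a, b, -, rfl⟩ := hs
  by_cases hxa : x = a
  · subst hxa; rw [swap_apply_left]
  by_cases hxb : x = b
  · subst hxb; rw [swap_apply_right, swap_comm]
  · exact absurd (swap_apply_of_ne_of_ne hxa hxb) hx

theorem IsSwap.eq_or_disjoint_of_commute {s t : Perm X} (hs : s.IsSwap) (ht : t.IsSwap)
    (h : Commute s t) : s = t ∨ s.Disjoint t := by
  obtain ⟨a, b, hab, rfl⟩ := hs
  have hconj : swap (t a) (t b) = swap a b := by
    rw [swap_apply_apply, ← h.eq, mul_inv_cancel_right]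
  by_cases hta : t a = a
  · right
    have htb : t b = b := by
      simpa [hta] using congrArg (fun p : Perm X => p a) hconj
    intro z
    by_cases hz : z = a ∨ z = b
    · rcases hz with rfl | rfl <;> simp [hta, htb]
    · push Not at hz; exact Or.inl (swap_apply_of_ne_of_ne hz.1 hz.2)
  · left
    have htab : t a = b := by
      have := congrArg (fun p : Perm X => p (t a)) hconj
      simp only [swap_apply_left] at this
      by_contra hne
      exact hab (t.injective (this.trans (swap_apply_of_ne_of_ne hta hne)).symm)
    rw [ht.eq_swap_apply hta, htab]

theorem exists_forall_map_swap_apply_ne {α : Perm X →* Perm Y} (hα : Function.Injective α)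
    (hswap : ∀ σ : Perm X, σ.IsSwap → (α σ).IsSwap) {x₀ x₁ x₂ : X}
    (h₀₁ : x₀ ≠ x₁) (h₀₂ : x₀ ≠ x₂) (h₁₂ : x₁ ≠ x₂) :
    ∃ c, ∀ x ≠ x₀, α (swap x₀ x) c ≠ c := by
  set t : X → Perm Y := fun x => α (swap x₀ x) with ht
  have ht_swap : ∀ x ≠ x₀, (t x).IsSwap := fun x hx => hswap _ ⟨x₀, x, hx.symm, rfl⟩
  have hnc : ∀ {x y}, x ≠ x₀ → y ≠ x₀ → x ≠ y → ¬Commute (t x) (t y) := by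
    intro x y hx hy hxy h
    have := congrArg (· x₀) (Commute.of_map hα h).eq
    simp only [mul_apply, swap_apply_left, swap_apply_of_ne_of_ne hy hxy.symm,
      swap_apply_of_ne_of_ne hx hxy] at this
    exact hxy this.symm
  obtain ⟨c, hc₁, hc₂⟩ := exists_apply_ne_and_apply_ne_of_not_commute
    (hnc h₀₁.symm h₀₂.symm h₁₂)
  refine ⟨c, fun x hx => ?_⟩
  by_cases hx₁ : x = x₁
  · rwa [hx₁]
  by_cases hx₂ : x = x₂
  · rwa [hx₂]
  have hu : α (swap x₁ x₂) = t x₁ * t x₂ * (t x₁)⁻¹ := by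
    rw [ht]; simp only [← map_inv, ← map_mul, ← swap_apply_apply, swap_apply_left,
      swap_apply_of_ne_of_ne h₀₂.symm h₁₂.symm]
  have hu_move : α (swap x₁ x₂) (t x₁ c) ≠ t x₁ c := by
    simpa [hu] using hc₂
  have hcomm : Commute (t x) (α (swap x₁ x₂)) := by
    refine (Disjoint.commute fun z => ?_).map α
    by_cases hz : z = x₀ ∨ z = x
    · right; rcases hz with rfl | rfl
      exacts [swap_apply_of_ne_of_ne h₀₁ h₀₂, swap_apply_of_ne_of_ne hx₁ hx₂]
    · push Not at hz; exact Or.inl (swap_apply_of_ne_of_ne hz.1 hz.2)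
  have hne : t x ≠ α (swap x₁ x₂) := fun h => hx <| by
    simpa [swap_apply_of_ne_of_ne h₀₁ h₀₂] using congrArg (· x₀) (hα h)
  have hfix : t x (t x₁ c) = t x₁ c := by
    rcases (ht_swap x hx).eq_or_disjoint_of_commute (hswap _ ⟨x₁, x₂, h₁₂, rfl⟩) hcomm with h | h
    · exact absurd h hne
    · exact (h (t x₁ c)).resolve_right hu_move
  obtain ⟨z, hz, hz₁⟩ := exists_apply_ne_and_apply_ne_of_not_commute (hnc hx h₀₁.symm hx₁)
  rw [(ht_swap x₁ h₀₁.symm).eq_swap_apply hc₁] at hz₁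
  rcases eq_or_ne z c with rfl | hzc
  · exact hz
  · have : z = t x₁ c := by
      by_contra h; exact hz₁ (swap_apply_of_ne_of_ne hzc h)
    exact absurd (this ▸ hfix) (this ▸ hz)

theorem apply_eq_or_of_commute_swap {c : Perm X} {x y : X} (hxy : x ≠ y)
    (h : Commute c (swap x y)) : c x = x ∨ c x = y := by
  by_contra! hne
  have := congrArg (· x) h.eq
  simp only [mul_apply, swap_apply_left, swap_apply_of_ne_of_ne hne.1 hne.2] at this
  exact hxy (c.injective this).symm

theorem closure_range_swap [Finite X] (x₀ : X) : closure (Set.range (swap x₀)) = ⊤ := by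
  rw [eq_top_iff, ← closure_isSwap, closure_le]
  rintro _ ⟨x, y, hxy, rfl⟩
  have hmem : ∀ z, swap x₀ z ∈ closure (Set.range (swap x₀)) := fun z => subset_closure ⟨z, rfl⟩
  by_cases hx : x = x₀
  · subst hx; exact hmem y
  by_cases hy : y = x₀
  · subst hy; rw [swap_comm]; exact hmem x
  rw [← swap_mul_swap_mul_swap hy hxy.symm, swap_comm y x₀]
  exact mul_mem (mul_mem (hmem x) (hmem y)) (hmem x)

theorem viaEmbedding_swap (ι : X ↪ Y) (u v : X) :
    (swap u v).viaEmbedding ι = swap (ι u) (ι v) := by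
  ext y
  by_cases hy : y ∈ Set.range ι
  · obtain ⟨x, rfl⟩ := hy
    rw [viaEmbedding_apply, ← ι.injective.map_swap]
  · obtain ⟨hu, hv⟩ : y ≠ ι u ∧ y ≠ ι v := ⟨fun h => hy ⟨u, h.symm⟩, fun h => hy ⟨v, h.symm⟩⟩
    rw [viaEmbedding_apply_of_notMem _ _ _ hy, swap_apply_of_ne_of_ne hu hv]

theorem exists_embedding_of_map_isSwap [Fintype X] {α : Perm X →* Perm Y}
    (hα : Function.Injective α) (hswap : ∀ σ : Perm X, σ.IsSwap → (α σ).IsSwap)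
    (hX : 2 < Fintype.card X) : ∃ e : X ↪ Y, α = viaEmbeddingHom e := by
  obtain ⟨x₀, x₁, x₂, h₀₁, h₀₂, h₁₂⟩ := Fintype.two_lt_card_iff.1 hX
  obtain ⟨c, hc⟩ := exists_forall_map_swap_apply_ne hα hswap h₀₁ h₀₂ h₁₂
  set e : X → Y := fun x => α (swap x₀ x) c
  have he₀ : e x₀ = c := by simp only [e, swap_self, ← Perm.one_def, map_one, one_apply]
  have he : ∀ x, α (swap x₀ x) = swap c (e x) := by
    intro x
    rcases eq_or_ne x x₀ with rfl | hx
    · rw [he₀, swap_self, swap_self, ← Perm.one_def, map_one, Perm.one_def]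
    · exact (hswap _ ⟨x₀, x, hx.symm, rfl⟩).eq_swap_apply (hc x hx)
  have he_inj : Function.Injective e := fun x y hxy => by
    simpa using congrArg (· x₀) (hα ((he x).trans ((congrArg (swap c) hxy).trans (he y).symm)))
  refine ⟨⟨e, he_inj⟩, MonoidHom.eq_of_eqOn_dense (closure_range_swap x₀) ?_⟩
  rintro _ ⟨x, rfl⟩
  rw [he, viaEmbeddingHom_apply, viaEmbedding_swap, Function.Embedding.coeFn_mk, he₀]

section Fintype

variable [Fintype X]

theorem eq_bot_of_forall_mul_self_eq_one (h5 : 5 ≤ Fintype.card X) (N : Subgroup (Perm X))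
    [N.Normal] (hN : ∀ σ ∈ N, σ * σ = 1) : N = ⊥ := by
  by_contra hne
  have hA := alternatingGroup_le_of_normal (by rwa [Nat.card_eq_fintype_card])
    ((nontrivial_iff_ne_bot N).2 hne)
  obtain ⟨a, b, c, hab, hac, hbc⟩ := Fintype.two_lt_card_iff.1 (by omega : 2 < Fintype.card X)
  have h3 := isThreeCycle_swap_mul_swap_same hab hac hbc
  have h1 : (swap a b * swap a c) ^ 2 = 1 := by rw [sq]; exact hN _ (hA h3.mem_alternatingGroup)
  have h2 := orderOf_dvd_of_pow_eq_one h1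
  rw [h3.orderOf] at h2
  norm_num at h2

variable {g : Perm X}

theorem cycleOf_eq_swap_of_mul_self (hg : g * g = 1) {x : X} (hx : g x ≠ x) :
    g.cycleOf x = swap x (g x) := by
  have hgx : g (g x) = x := by rw [← mul_apply, hg, one_apply]
  have := (isCycle_cycleOf g hx).eq_swap_of_apply_apply_eq_self (x := x)
    (by rwa [cycleOf_apply_self]) (by rw [cycleOf_apply_self, cycleOf_apply_apply_self, hgx])
  rwa [cycleOf_apply_self] at this

theorem two_mul_card_cycleFactorsFinset (hg : g * g = 1) :
    2 * #g.cycleFactorsFinset = #g.support := by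
  have h2 : ∀ n ∈ g.cycleType, n = 2 := fun n hn =>
    le_antisymm (Nat.le_of_dvd two_pos <| (dvd_of_mem_cycleType hn).trans <|
      orderOf_dvd_of_pow_eq_one (by rwa [sq])) (two_le_of_mem_cycleType hn)
  rw [← sum_cycleType, Multiset.eq_replicate.2 ⟨rfl, h2⟩, Multiset.sum_replicate, smul_eq_mul,
    cycleType_def, Multiset.card_map, mul_comm]
  rfl

variable (g) in
def centralizerToPermFixedPoints : centralizer {g} →* Perm (Function.fixedPoints g) where
  toFun k := (k : Perm X).subtypePerm fun _ => apply_mem_fixedPoints_iff_mem_of_mem_centralizer k.2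
  map_one' := rfl
  map_mul' _ _ := rfl

theorem mul_self_eq_one_of_mem_ker (hg : g * g = 1) {k : centralizer {g}}
    (h₁ : k ∈ (OnCycleFactors.toPermHom g).ker) (h₂ : k ∈ (centralizerToPermFixedPoints g).ker) :
    (k : Perm X) * k = 1 := by
  refine mul_self_eq_one_of_forall_apply_eq_or hg fun x => ?_
  by_cases hx : g x = x
  · exact Or.inl <| congrArg Subtype.val <|
      DFunLike.congr_fun (MonoidHom.mem_ker.1 h₂) (⟨x, hx⟩ : Function.fixedPoints g)
  · have hcomm := (OnCycleFactors.mem_ker_toPermHom_iff g k).1 h₁ _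
      (cycleOf_mem_cycleFactorsFinset_iff.2 (mem_support.2 hx))
    rw [cycleOf_eq_swap_of_mul_self hg hx] at hcomm
    exact apply_eq_or_of_commute_swap (Ne.symm hx) hcomm

theorem factorial_card_le_of_injective {β : Type*} [DecidableEq β] [Fintype β]
    (h5 : 5 ≤ Fintype.card β) (hg : g * g = 1) {f : Perm β →* centralizer {g}}
    (hf : Function.Injective f) :
    (Fintype.card β)! ≤ (#g.cycleFactorsFinset)! * (Fintype.card (Function.fixedPoints g))! := by
  set ν := ((OnCycleFactors.toPermHom g).prod (centralizerToPermFixedPoints g)).comp f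
  have hν : Function.Injective ν := by
    rw [← MonoidHom.ker_eq_bot_iff]
    refine eq_bot_of_forall_mul_self_eq_one h5 _ fun σ hσ => hf ?_
    rw [MonoidHom.mem_ker, MonoidHom.comp_apply, MonoidHom.prod_apply, Prod.mk_eq_one] at hσ
    rw [map_mul, map_one]
    exact Subtype.ext (mul_self_eq_one_of_mem_ker hg hσ.1 hσ.2)
  simpa [Fintype.card_perm] using Fintype.card_le_of_injective ν hν

theorem isSwap_map_of_isSwap [Fintype Y] {α : Perm X →* Perm Y} (hα : Function.Injective α)
    (hX : 7 ≤ Fintype.card X) (hY : Fintype.card Y ≤ Fintype.card X + 1) {σ : Perm X}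
    (hσ : σ.IsSwap) : (α σ).IsSwap := by
  obtain ⟨a, b, hab, rfl⟩ := hσ
  set g := α (swap a b)
  have hg : g * g = 1 := by rw [← map_mul, swap_mul_self, map_one]
  have hg₁ : g ≠ 1 := fun h => hab (swap_eq_one_iff.1 (hα (h.trans (map_one α).symm)))
  have hcomm : ∀ τ : Perm (Function.fixedPoints (swap a b)), α (ofSubtype τ) ∈ centralizer {g} :=
    fun τ => mem_centralizer_singleton_iff.2 <| Commute.eq <| Commute.map
      (disjoint_iff_disjoint_support.2 (ofSubtype_support_disjoint τ)).commute α
  have hcard := factorial_card_le_of_injective (f := (α.comp ofSubtype).codRestrict _ hcomm)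
    (by rw [card_fixedPoints, sum_cycleType, card_support_swap hab]; omega) hg
    (fun τ τ' h => ofSubtype_injective (hα (congrArg Subtype.val h)))
  rw [card_fixedPoints, card_fixedPoints, sum_cycleType, sum_cycleType,
    card_support_swap hab] at hcard
  rw [← card_support_eq_two]
  by_contra hne
  have := two_mul_card_cycleFactorsFinset hg
  have := two_le_card_support_of_ne_one hg₁
  have := card_le_univ g.support
  have := Nat.factorial_mul_factorial_lt_factorial (n := Fintype.card X - 2)
    (k := #g.cycleFactorsFinset) (m := Fintype.card Y - #g.support) (by omega) (by omega) (by omega)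
  omega

end Fintype

end Equiv.Perm

/-- For `d ≥ 7`, every injective homomorphism `S_d → S_{d+1}` is conjugate
to the standard embedding (extension of permutations by fixing the extra letter); in
particular it sends every transposition to a transposition. -/
theorem symm_embedding_conj_standard (d : ℕ) (hd : 7 ≤ d)
    (α : Equiv.Perm (Fin d) →* Equiv.Perm (Fin (d + 1)))
    (hα : Function.Injective α) :
    (∃ g : Equiv.Perm (Fin (d + 1)),
      ∀ x : Equiv.Perm (Fin d),
        α x = g * x.viaEmbedding (Fin.castLEEmb (by omega : d ≤ d + 1)) * g⁻¹) ∧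
    (∀ x : Equiv.Perm (Fin d), x.IsSwap → (α x).IsSwap) := by
  have hswap : ∀ x : Perm (Fin d), x.IsSwap → (α x).IsSwap := fun x =>
    isSwap_map_of_isSwap hα (by simpa) (by simp)
  obtain ⟨e, rfl⟩ := exists_embedding_of_map_isSwap hα hswap (by simp; omega)
  obtain ⟨G, hG⟩ := Perm.exists_extending_pair _ _ (Fin.castLEEmb (by omega)).injective e.injective
  exact ⟨⟨G, fun x => viaEmbedding_eq_mul_mul_inv hG x⟩, hswap⟩
end

section
/- The group F₃ with presentation ⟨x₁, x₂, y | x₁² = x₂² = (x₁x₂)^r = y³ = [y, x₁x₂] = [y, x₂x₁] = 1, x₁⁻¹yx₁ = y⁻¹, x₂⁻¹yx₂ = y⁻¹⟩, where r ≥ 3 is odd and not divisible by 3, is isomorphic to the dihedral group D_{3r}; moreover its subgroup generated by y and z = x₁x₂ is a normal subgroup isomorphic to Z/3Z × Z/rZ, and F₃ has trivial center. -/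
open scoped commutatorElement

/-- The relations of the group
`F₃ = ⟨x₁, x₂, y | x₁² = x₂² = (x₁x₂)^r = y³ = [y,x₁x₂] = [y,x₂x₁] = 1,
x₁⁻¹yx₁ = y⁻¹, x₂⁻¹yx₂ = y⁻¹⟩`, where the three generators of the free group are
`x₁ = of 0`, `x₂ = of 1`, `y = of 2`. -/
def F3rels (r : ℕ) : Set (FreeGroup (Fin 3)) :=
  { FreeGroup.of (0 : Fin 3) ^ 2, FreeGroup.of (1 : Fin 3) ^ 2,
    (FreeGroup.of (0 : Fin 3) * FreeGroup.of (1 : Fin 3)) ^ r, FreeGroup.of (2 : Fin 3) ^ 3,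
    ⁅FreeGroup.of (2 : Fin 3), FreeGroup.of (0 : Fin 3) * FreeGroup.of (1 : Fin 3)⁆,
    ⁅FreeGroup.of (2 : Fin 3), FreeGroup.of (1 : Fin 3) * FreeGroup.of (0 : Fin 3)⁆,
    (FreeGroup.of (0 : Fin 3))⁻¹ * FreeGroup.of (2 : Fin 3) * FreeGroup.of (0 : Fin 3) * FreeGroup.of (2 : Fin 3),
    (FreeGroup.of (1 : Fin 3))⁻¹ * FreeGroup.of (2 : Fin 3) * FreeGroup.of (1 : Fin 3) * FreeGroup.of (2 : Fin 3) }

/-!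
Sending `x₁ ↦ s`, `x₂ ↦ s ρ³`, `y ↦ ρ^r` respects the relations, so it defines a homomorphism
`F₃ → D_{3r} = ⟨ρ, s⟩`. Conversely, as `gcd(3, r) = 1`, the commuting elements `y` (with
`y³ = 1`) and `z = x₁x₂` (with `zʳ = 1`) are the `r`-th and the third power of one element
`w`, and conjugation by `x₁` inverts `w` since it inverts both of these powers; so `ρ ↦ w`,
`s ↦ x₁` defines the inverse homomorphism. Under this isomorphism `⟨y, z⟩ = ⟨w⟩` becomes the
rotation subgroup, which has index 2 and is cyclic of order `3r`, hence `≅ ℤ/3 × ℤ/r`; the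
centre is trivial because `3r` is odd.
-/

section PowVal

variable {G : Type*} [Group G] {n : ℕ} {t : G}

lemma pow_zmod_val_natCast (ht : t ^ n = 1) (k : ℕ) : t ^ (k : ZMod n).val = t ^ k := by
  rw [ZMod.val_natCast, ← pow_eq_pow_mod _ ht]

variable [NeZero n]

lemma pow_zmod_val_add (ht : t ^ n = 1) (i j : ZMod n) :
    t ^ (i + j).val = t ^ i.val * t ^ j.val := by
  rw [ZMod.val_add, ← pow_eq_pow_mod _ ht, pow_add]

lemma pow_zmod_val_sub (ht : t ^ n = 1) (i j : ZMod n) :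
    t ^ (j - i).val = (t ^ i.val)⁻¹ * t ^ j.val := by
  rw [eq_inv_mul_iff_mul_eq, ← pow_zmod_val_add ht, add_sub_cancel]

end PowVal

namespace DihedralGroup

variable {n : ℕ} {G : Type*} [Group G]

lemma hom_ext {f g : DihedralGroup n →* G} (hr : f (r 1) = g (r 1)) (hs : f (sr 0) = g (sr 0)) :
    f = g := by
  have hr' : ∀ i, f (r i) = g (r i) := fun i => by
    obtain ⟨k, rfl⟩ := ZMod.intCast_surjective i
    rw [← r_one_zpow, map_zpow, map_zpow, hr]
  ext (i | i)
  · exact hr' i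
  · rw [← zero_add i, ← sr_mul_r, map_mul, map_mul, hs, hr']

variable [NeZero n]

def lift (s t : G) (hs : s ^ 2 = 1) (ht : t ^ n = 1) (hst : s * t * s⁻¹ = t⁻¹) :
    DihedralGroup n →* G :=
  MonoidHom.mk' (fun | r i => t ^ i.val | sr i => s * t ^ i.val) <| by
    have hsinv : s⁻¹ = s := inv_eq_of_mul_eq_one_right (by rw [← sq, hs])
    have hswap : ∀ k : ℕ, t ^ k * s = s * (t ^ k)⁻¹ := fun k => by
      rw [← inv_pow, ← hst, conj_pow, hsinv, ← mul_assoc, ← mul_assoc, ← sq, hs, one_mul]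
    rintro (i | i) (j | j)
    · exact pow_zmod_val_add ht i j
    · change s * t ^ (j - i).val = t ^ i.val * (s * t ^ j.val)
      rw [pow_zmod_val_sub ht, ← mul_assoc (t ^ i.val), hswap, mul_assoc]
    · change s * t ^ (i + j).val = s * t ^ i.val * t ^ j.val
      rw [pow_zmod_val_add ht, mul_assoc]
    · change t ^ (j - i).val = s * t ^ i.val * (s * t ^ j.val)
      rw [pow_zmod_val_sub ht, mul_assoc, ← mul_assoc (t ^ i.val), hswap, ← mul_assoc,
        ← mul_assoc, ← sq, hs, one_mul]

variable {s t : G} {hs : s ^ 2 = 1} {ht : t ^ n = 1} {hst : s * t * s⁻¹ = t⁻¹}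

@[simp] lemma lift_r (i : ZMod n) : lift s t hs ht hst (r i) = t ^ i.val := rfl

@[simp] lemma lift_sr (i : ZMod n) : lift s t hs ht hst (sr i) = s * t ^ i.val := rfl

end DihedralGroup

section Coprime

variable {G : Type*} [Group G] {m n : ℕ}

lemma exists_zpow_mul_zpow_eq_self (hmn : m.Coprime n) :
    ∃ a b : ℤ, ∀ u : G, (u ^ m) ^ a * (u ^ n) ^ b = u := by
  obtain ⟨a, b, hab⟩ : IsCoprime (m : ℤ) n := Nat.isCoprime_iff_coprime.mpr hmn
  refine ⟨a, b, fun u => ?_⟩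
  rw [← zpow_natCast, ← zpow_natCast, ← zpow_mul, ← zpow_mul, ← zpow_add, mul_comm,
    add_comm, mul_comm (n : ℤ), add_comm, hab, zpow_one]

lemma eq_of_pow_eq_of_pow_eq (hmn : m.Coprime n) {u v : G} (hm : u ^ m = v ^ m)
    (hn : u ^ n = v ^ n) : u = v := by
  obtain ⟨a, b, h⟩ := exists_zpow_mul_zpow_eq_self (G := G) hmn
  rw [← h u, ← h v, hm, hn]

lemma Subgroup.closure_pow_pow_eq_zpowers (hmn : m.Coprime n) (u : G) :
    closure {u ^ m, u ^ n} = zpowers u := by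
  refine le_antisymm ?_ ?_
  · rw [closure_le, Set.insert_subset_iff, Set.singleton_subset_iff]
    exact ⟨npow_mem_zpowers u m, npow_mem_zpowers u n⟩
  · obtain ⟨a, b, h⟩ := exists_zpow_mul_zpow_eq_self (G := G) hmn
    have hu : (u ^ m) ^ a * (u ^ n) ^ b ∈ closure {u ^ m, u ^ n} :=
      mul_mem (zpow_mem (subset_closure (by simp)) a) (zpow_mem (subset_closure (by simp)) b)
    rwa [h, ← zpowers_le] at hu

lemma Commute.exists_pow_eq_and_pow_eq {y z : G} (h : Commute y z) (hy : y ^ m = 1)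
    (hz : z ^ n = 1) (hmn : m.Coprime n) : ∃ w : G, w ^ n = y ∧ w ^ m = z := by
  obtain ⟨a, b, hab⟩ := exists_zpow_mul_zpow_eq_self (G := G) hmn
  have hpow : ∀ k : ℕ, (y ^ b * z ^ a) ^ k = (y ^ k) ^ b * (z ^ k) ^ a := fun k => by
    simp only [(h.zpow_zpow b a).mul_pow, ← zpow_natCast, ← zpow_mul, mul_comm]
  refine ⟨y ^ b * z ^ a, ?_, ?_⟩
  · rw [hpow, hz, one_zpow, mul_one]
    simpa [hy] using hab y
  · rw [hpow, hy, one_zpow, one_mul]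
    simpa [hz] using hab z

end Coprime

section ThreeGenerators

variable {G : Type*} [Group G] {x₁ x₂ y : G} {r : ℕ}

lemma exists_rotation_of_F3_relations (hx₁ : x₁ ^ 2 = 1) (hx₂ : x₂ ^ 2 = 1)
    (hz : (x₁ * x₂) ^ r = 1) (hy : y ^ 3 = 1) (hyz : Commute y (x₁ * x₂))
    (hx₁y : x₁⁻¹ * y * x₁ * y = 1) (h3 : Nat.Coprime 3 r) :
    ∃ w : G, w ^ r = y ∧ w ^ 3 = x₁ * x₂ ∧ x₁ * w * x₁⁻¹ = w⁻¹ := by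
  obtain ⟨w, hwr, hw3⟩ := hyz.exists_pow_eq_and_pow_eq hy hz h3
  have hx₁inv : x₁⁻¹ = x₁ := inv_eq_of_mul_eq_one_right (by rw [← sq, hx₁])
  have hx₂inv : x₂⁻¹ = x₂ := inv_eq_of_mul_eq_one_right (by rw [← sq, hx₂])
  refine ⟨w, hwr, hw3, eq_of_pow_eq_of_pow_eq h3 ?_ ?_⟩
  · rw [conj_pow, inv_pow, hw3, mul_inv_rev, hx₁inv, hx₂inv, ← mul_assoc, ← sq, hx₁,
      one_mul]
  · rw [conj_pow, inv_pow, hwr, ← mul_eq_one_iff_eq_inv.mp hx₁y, hx₁inv]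

end ThreeGenerators

namespace F3rels

variable {r : ℕ}

lemma of_zero_sq : (PresentedGroup.of 0 : PresentedGroup (F3rels r)) ^ 2 = 1 := by
  have h := PresentedGroup.one_of_mem (rels := F3rels r) (x := .of 0 ^ 2) (by simp [F3rels])
  rwa [map_pow] at h

lemma of_one_sq : (PresentedGroup.of 1 : PresentedGroup (F3rels r)) ^ 2 = 1 := by
  have h := PresentedGroup.one_of_mem (rels := F3rels r) (x := .of 1 ^ 2) (by simp [F3rels])
  rwa [map_pow] at h

lemma of_zero_mul_of_one_pow :
    (PresentedGroup.of 0 * PresentedGroup.of 1 : PresentedGroup (F3rels r)) ^ r = 1 := by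
  have h := PresentedGroup.one_of_mem (rels := F3rels r) (x := (.of 0 * .of 1) ^ r)
    (by simp [F3rels])
  rwa [map_pow, map_mul] at h

lemma of_two_pow_three : (PresentedGroup.of 2 : PresentedGroup (F3rels r)) ^ 3 = 1 := by
  have h := PresentedGroup.one_of_mem (rels := F3rels r) (x := .of 2 ^ 3) (by simp [F3rels])
  rwa [map_pow] at h

lemma commute_of_two_of_zero_mul_of_one :
    Commute (PresentedGroup.of 2 : PresentedGroup (F3rels r))
      (PresentedGroup.of 0 * PresentedGroup.of 1) := by
  have h := PresentedGroup.one_of_mem (rels := F3rels r)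
    (x := ⁅FreeGroup.of (2 : Fin 3), .of 0 * .of 1⁆) (by simp [F3rels])
  rwa [map_commutatorElement, map_mul, commutatorElement_eq_one_iff_commute] at h

lemma of_zero_inv_mul_of_two_mul_of_zero_mul_of_two :
    (PresentedGroup.of 0 : PresentedGroup (F3rels r))⁻¹ * PresentedGroup.of 2 *
      PresentedGroup.of 0 * PresentedGroup.of 2 = 1 := by
  have h := PresentedGroup.one_of_mem (rels := F3rels r)
    (x := (.of 0)⁻¹ * .of 2 * .of 0 * .of 2) (by simp [F3rels])
  rwa [map_mul, map_mul, map_mul, map_inv] at h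

def dihedralImage (r : ℕ) : Fin 3 → DihedralGroup (3 * r) := ![.sr 0, .sr 3, .r r]

lemma lift_dihedralImage_eq_one (r : ℕ) :
    ∀ w ∈ F3rels r, FreeGroup.lift (dihedralImage r) w = 1 := by
  have h3r : (3 * r : ZMod (3 * r)) = 0 := by exact_mod_cast ZMod.natCast_self (3 * r)
  have hr3 : (r * 3 : ZMod (3 * r)) = 0 := by linear_combination h3r
  simp only [F3rels, Set.mem_insert_iff, Set.mem_singleton_iff, forall_eq_or_imp, forall_eq,
    map_pow, map_mul, map_inv, map_commutatorElement, FreeGroup.lift_apply_of, dihedralImage]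
  simp [commutatorElement_def, sq, DihedralGroup.r_pow, DihedralGroup.sr_mul_sr,
    DihedralGroup.sr_mul_r, DihedralGroup.r_mul_r, DihedralGroup.inv_sr, DihedralGroup.inv_r,
    h3r, hr3]

def toDihedral (r : ℕ) : PresentedGroup (F3rels r) →* DihedralGroup (3 * r) :=
  PresentedGroup.toGroup (lift_dihedralImage_eq_one r)

@[simp] lemma toDihedral_of_zero : toDihedral r (.of 0) = .sr 0 := PresentedGroup.toGroup.of _

@[simp] lemma toDihedral_of_one : toDihedral r (.of 1) = .sr 3 := PresentedGroup.toGroup.of _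

@[simp] lemma toDihedral_of_two : toDihedral r (.of 2) = .r r := PresentedGroup.toGroup.of _

theorem exists_mulEquiv_dihedral (hr : r ≠ 0) (h3 : ¬ 3 ∣ r) :
    ∃ (e : PresentedGroup (F3rels r) ≃* DihedralGroup (3 * r)) (w : PresentedGroup (F3rels r)),
      Subgroup.closure {PresentedGroup.of 2, PresentedGroup.of 0 * PresentedGroup.of 1} =
        Subgroup.zpowers w ∧ e w = DihedralGroup.r 1 := by
  have : NeZero (3 * r) := ⟨by positivity⟩
  have hcop : Nat.Coprime 3 r := (Nat.Prime.coprime_iff_not_dvd Nat.prime_three).mpr h3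
  obtain ⟨w, hwr, hw3, hconj⟩ := exists_rotation_of_F3_relations of_zero_sq of_one_sq
    of_zero_mul_of_one_pow of_two_pow_three commute_of_two_of_zero_mul_of_one
    of_zero_inv_mul_of_two_mul_of_zero_mul_of_two hcop
  have hw_pow : w ^ (3 * r) = 1 := by rw [pow_mul, hw3, of_zero_mul_of_one_pow]
  let ψ := DihedralGroup.lift (PresentedGroup.of 0) w of_zero_sq hw_pow hconj
  have hw_image : toDihedral r w = DihedralGroup.r 1 := by
    refine eq_of_pow_eq_of_pow_eq hcop ?_ ?_
    · simp [← map_pow, hw3, DihedralGroup.sr_mul_sr]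
    · simp [← map_pow, hwr]
  have hψ₀ : ψ (toDihedral r (.of 0)) = .of 0 := by simp [ψ]
  have hψ₁ : ψ (toDihedral r (.of 1)) = .of 1 := by
    have hval3 : w ^ (3 : ZMod (3 * r)).val = w ^ 3 := by
      simpa using pow_zmod_val_natCast hw_pow 3
    simp [ψ, hval3, hw3, ← mul_assoc, ← sq, of_zero_sq]
  have hψ₂ : ψ (toDihedral r (.of 2)) = .of 2 := by
    rw [toDihedral_of_two, DihedralGroup.lift_r, pow_zmod_val_natCast hw_pow, hwr]
  have hψφ : ψ.comp (toDihedral r) = MonoidHom.id _ :=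
    PresentedGroup.ext fun i => by fin_cases i; exacts [hψ₀, hψ₁, hψ₂]
  have hφψ : (toDihedral r).comp ψ = MonoidHom.id _ :=
    DihedralGroup.hom_ext (by simp [ψ, hw_image]) (by simp [ψ])
  refine ⟨MonoidHom.toMulEquiv (toDihedral r) ψ hψφ hφψ, w, ?_, hw_image⟩
  rw [← hwr, ← hw3]
  exact Subgroup.closure_pow_pow_eq_zpowers hcop.symm w

end F3rels

lemma IsCyclic.nonempty_mulEquiv_multiplicative_zmod_prod {G : Type*} [Group G] [IsCyclic G]
    {m n : ℕ} (hmn : m.Coprime n) (hG : Nat.card G = m * n) :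
    Nonempty (G ≃* Multiplicative (ZMod m) × Multiplicative (ZMod n)) := by
  have hcard : ∀ k, Nat.card (Multiplicative (ZMod k)) = k := fun k =>
    (Nat.card_congr Multiplicative.toAdd).trans (Nat.card_zmod k)
  have : IsCyclic (Multiplicative (ZMod m) × Multiplicative (ZMod n)) :=
    Group.isCyclic_prod_iff.mpr ⟨inferInstance, inferInstance, by rwa [hcard, hcard]⟩
  exact ⟨mulEquivOfCyclicCardEq (by rw [hG, Nat.card_prod, hcard, hcard])⟩

/-- for `r ≥ 3` odd and not divisible by `3`, the presented group `F₃` is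
isomorphic to the dihedral group `D_{3r}`; its subgroup generated by `y` and
`z = x₁x₂` is normal and isomorphic to `ℤ/3 × ℤ/r`, and `F₃` has trivial center. -/
theorem F3_iso_dihedral (r : ℕ) (hr : 3 ≤ r) (hodd : Odd r) (h3 : ¬ (3 ∣ r)) :
    Nonempty (PresentedGroup (F3rels r) ≃* DihedralGroup (3 * r)) ∧
    (Subgroup.closure
        ({PresentedGroup.of 2, PresentedGroup.of 0 * PresentedGroup.of 1} :
          Set (PresentedGroup (F3rels r)))).Normal ∧
    Nonempty ((Subgroup.closure
        ({PresentedGroup.of 2, PresentedGroup.of 0 * PresentedGroup.of 1} :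
          Set (PresentedGroup (F3rels r)))) ≃*
        Multiplicative (ZMod 3) × Multiplicative (ZMod r)) ∧
    Subgroup.center (PresentedGroup (F3rels r)) = ⊥ := by
  obtain ⟨e, w, hH, hew⟩ := F3rels.exists_mulEquiv_dihedral (by omega) h3
  have hcard_w : Nat.card (Subgroup.zpowers w) = 3 * r := by
    rw [Nat.card_zpowers, ← e.orderOf_eq, hew, DihedralGroup.orderOf_r_one]
  refine ⟨⟨e⟩, hH ▸ ?_, hH ▸ ?_, ?_⟩
  · apply Subgroup.normal_of_index_eq_two
    have h := (Subgroup.zpowers w).card_mul_index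
    rw [hcard_w, Nat.card_congr e.toEquiv, DihedralGroup.nat_card] at h
    nlinarith
  · exact IsCyclic.nonempty_mulEquiv_multiplicative_zmod_prod
      ((Nat.Prime.coprime_iff_not_dvd Nat.prime_three).mpr h3) hcard_w
  · rw [← Subgroup.card_eq_one, Nat.card_congr (Subgroup.centerCongr e).toEquiv,
      DihedralGroup.center_eq_bot_of_odd_ne_one (Nat.odd_mul.mpr ⟨by decide, hodd⟩) (by omega),
      Subgroup.card_bot]
end
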